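/- arXiv:1605.05121 — 6 statements merged into one kernel-verified Lean document; each statement's English description precedes it below -/
import Mathlib

section
/- If C is a finite set of points in R^d in strictly convex position (every point of C is a vertex of conv(C)) and T is a finite nonempty set of translation vectors, then for each y in C there exists t in T such that x = y + t lies in exactly one translate C + t' with t' in T (i.e., x is a lonely point of C + T). -/
/-!
A point `y` of `C` that is a vertex of `conv C` is strictly separated from the other points of `C`
by a linear functional `f`. Choose `t ∈ T` maximising `f`. If `y + t = c + t'` with `c ∈ C` and
`t' ∈ T`, then `f y + f t = f c + f t' ≤ f c + f t`, so `f y ≤ f c`, which forces `c = y` and hence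
`t' = t`.
-/

section Separation

variable {E : Type*} [TopologicalSpace E] [AddCommGroup E] [IsTopologicalAddGroup E]
  [Module ℝ E] [ContinuousSMul ℝ E] [LocallyConvexSpace ℝ E] [T2Space E]

theorem Set.Finite.exists_strongDual_lt_of_notMem_convexHull {s : Set E} {y : E}
    (hs : s.Finite) (hy : y ∉ convexHull ℝ s) :
    ∃ f : StrongDual ℝ E, ∀ c ∈ s, f c < f y := by
  obtain ⟨f, u, hfu, huy⟩ := geometric_hahn_banach_closed_point (convex_convexHull ℝ s)
    (hs.isCompact_convexHull ℝ).isClosed hy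
  exact ⟨f, fun c hc => (hfu c (subset_convexHull ℝ s hc)).trans huy⟩

end Separation

theorem eq_of_add_eq_add_of_isMaxOn {E M F : Type*} [AddCommMonoid E] [AddCommMonoid M]
    [LinearOrder M] [IsOrderedCancelAddMonoid M] [FunLike F E M] [AddHomClass F E M]
    [IsLeftCancelAdd E] (f : F) {C T : Set E} {y t c t' : E}
    (hy : ∀ c ∈ C, c ≠ y → f c < f y) (ht : IsMaxOn f T t) (hc : c ∈ C) (ht' : t' ∈ T)
    (h : y + t = c + t') : c = y ∧ t' = t := by
  have hfy : f y + f t = f c + f t' := by rw [← map_add, h, map_add]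
  have hcy : c = y := by
    by_contra hne
    have : f c + f t' < f y + f t := add_lt_add_of_lt_of_le (hy c hc hne) (ht ht')
    exact this.ne hfy.symm
  subst hcy
  exact ⟨rfl, (add_left_cancel h).symm⟩

/-- lonely point lemma (existence for each point of `C`). -/
theorem lonely_point_exists {d : ℕ} (C T : Finset (EuclideanSpace ℝ (Fin d)))
    (hC : ∀ y ∈ C, y ∉ convexHull ℝ ((C : Set (EuclideanSpace ℝ (Fin d))) \ {y}))
    (hT : T.Nonempty) :
    ∀ y ∈ C, ∃ t ∈ T, ∃! t' : EuclideanSpace ℝ (Fin d),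
      t' ∈ T ∧ ∃ c ∈ C, y + t = c + t' := by
  intro y hy
  obtain ⟨f, hf⟩ := (C.finite_toSet.sdiff (t := {y})).exists_strongDual_lt_of_notMem_convexHull
    (hC y hy)
  obtain ⟨t, ht, htmax⟩ := T.exists_max_image f hT
  refine ⟨t, ht, t, ⟨ht, y, hy, rfl⟩, ?_⟩
  rintro t' ⟨ht', c, hc, h⟩
  exact (eq_of_add_eq_add_of_isMaxOn f (C := C) (fun c hc hne => hf c ⟨hc, hne⟩) htmax hc ht'
    h).2
end

section
/- For a finite set C ⊂ R^d in strictly convex position with |C| = k, and any finite nonempty set T of translation vectors, the set C + T contains at least k lonely points. -/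
/-!
Separate each `c ∈ C` strictly from the convex hull of `C \ {c}` by a linear functional `f`, and
pick `t ∈ T` maximising `f`. Then `c + t` is lonely: if `c + t = c' + t'` with `c' ∈ C`,
`t' ∈ T`, then `f c' = f c + f t - f t' ≥ f c`, which forces `c' = c`. Since a lonely point `x`
determines its decomposition `x = c + t`, distinct points of `C` give distinct lonely points.
-/

open Set
open scoped Pointwise

section Separation

variable {E : Type*} [TopologicalSpace E] [AddCommGroup E] [Module ℝ E] [IsTopologicalAddGroup E]
  [ContinuousSMul ℝ E] [LocallyConvexSpace ℝ E] [T2Space E]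

theorem Set.Finite.exists_forall_lt_of_notMem_convexHull {s : Set E} {x : E} (hs : s.Finite)
    (hx : x ∉ convexHull ℝ s) : ∃ f : StrongDual ℝ E, ∀ y ∈ s, f y < f x := by
  obtain ⟨f, u, hfu, hux⟩ :=
    geometric_hahn_banach_closed_point (convex_convexHull ℝ s) (hs.isClosed_convexHull ℝ) hx
  exact ⟨f, fun y hy => (hfu y (subset_convexHull ℝ s hy)).trans hux⟩

end Separation

section Lonely

variable {E : Type*} [AddCommGroup E] {C T : Set E}

def lonelyPoints (C T : Set E) : Set E :=
  {x | ∃! t, t ∈ T ∧ x - t ∈ C}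

theorem lonelyPoints_subset_add : lonelyPoints C T ⊆ C + T := by
  rintro x ⟨t, ⟨ht, hxt⟩, -⟩
  exact ⟨x - t, hxt, t, ht, sub_add_cancel x t⟩

theorem Set.Finite.lonelyPoints (hC : C.Finite) (hT : T.Finite) : (lonelyPoints C T).Finite :=
  (hC.add hT).subset lonelyPoints_subset_add

theorem add_mem_lonelyPoints_of_isMaxOn {α : Type*} [AddCommGroup α] [PartialOrder α]
    [IsOrderedAddMonoid α] (f : E →+ α) {c t : E} (hc : c ∈ C)
    (hfc : ∀ c' ∈ C, c' ≠ c → f c' < f c) (ht : t ∈ T) (hft : IsMaxOn f T t) :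
    c + t ∈ lonelyPoints C T := by
  refine ⟨t, ⟨ht, by rwa [add_sub_cancel_right]⟩, fun t' ⟨ht', hc'⟩ => ?_⟩
  by_contra hne
  have hc'c : c + t - t' ≠ c := by rwa [Ne, sub_eq_iff_eq_add, add_left_cancel_iff, eq_comm]
  have hle : f c ≤ f (c + t - t') := by
    rw [map_sub, map_add, add_sub_assoc]
    exact le_add_of_nonneg_right (sub_nonneg.2 (hft ht'))
  exact (hfc _ hc' hc'c).not_ge hle

theorem injOn_add_of_mem_lonelyPoints {τ : E → E} (hτ : ∀ c ∈ C, τ c ∈ T)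
    (hlonely : ∀ c ∈ C, c + τ c ∈ lonelyPoints C T) : InjOn (fun c => c + τ c) C := by
  intro c₁ hc₁ c₂ hc₂ (heq : c₁ + τ c₁ = c₂ + τ c₂)
  obtain ⟨t, -, huniq⟩ := hlonely c₁ hc₁
  have h₁ : τ c₁ = t := huniq _ ⟨hτ c₁ hc₁, by rwa [add_sub_cancel_right]⟩
  have h₂ : τ c₂ = t := huniq _ ⟨hτ c₂ hc₂, by rwa [heq, add_sub_cancel_right]⟩
  rw [h₁, h₂] at heq
  exact add_right_cancel heq

theorem ncard_le_ncard_lonelyPoints (hC : C.Finite) (hT : T.Finite)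
    (h : ∀ c ∈ C, ∃ t ∈ T, c + t ∈ lonelyPoints C T) :
    C.ncard ≤ (lonelyPoints C T).ncard := by
  choose! τ hτ hlonely using h
  exact ncard_le_ncard_of_injOn _ hlonely (injOn_add_of_mem_lonelyPoints hτ hlonely)
    (hC.lonelyPoints hT)

end Lonely

/-- `C + T` contains at least `|C|` lonely points. -/
theorem card_lonely_points {d : ℕ} (C T : Finset (EuclideanSpace ℝ (Fin d)))
    (hC : ∀ y ∈ C, y ∉ convexHull ℝ ((C : Set (EuclideanSpace ℝ (Fin d))) \ {y}))
    (hT : T.Nonempty) :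
    C.card ≤ {x : EuclideanSpace ℝ (Fin d) |
      ∃! t : EuclideanSpace ℝ (Fin d), t ∈ T ∧ x - t ∈ C}.ncard := by
  rw [← ncard_coe_finset]
  refine ncard_le_ncard_lonelyPoints C.finite_toSet T.finite_toSet fun c hc => ?_
  obtain ⟨f, hf⟩ := (C.finite_toSet.subset sdiff_subset).exists_forall_lt_of_notMem_convexHull
    (hC c hc)
  obtain ⟨t, ht, hft⟩ := T.exists_max_image f hT
  exact ⟨t, ht, add_mem_lonelyPoints_of_isMaxOn f.toLinearMap.toAddMonoidHom hc
    (fun c' hc' hne => hf c' ⟨hc', hne⟩) ht hft⟩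
end

section
/- If m unit vectors in R^n satisfy 2^m > (e(m/n + 2)√(n+1))^n, then they form a selectively balancing set. -/
/-!
If `m ≤ 4n` the hypothesis fails, so assume `m > 4n`. Averaged over all `2^m` sign vectors `σ`,
`‖∑ σᵢ uᵢ‖²` equals `m` (the cross terms cancel), so by Markov at least `3/4` of the signed sums lie
in the ball of radius `2√m`. Cut `ℝⁿ` into half-open cubes of side `2/√n`, hence of diameter `2`.
Encoding cubes by `ℕ`-vectors, the cubes meeting that ball are counted by stars and bars, and
`binom(N, n) ≤ (eN/n)ⁿ` bounds their number by `(e(2√m + 2))ⁿ < (3/4) 2^m`. So two signed sums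
with sign vectors `σ ≠ τ` share a cube, and `(σ - τ)/2` has entries in `{-1, 0, 1}`, is nonzero,
and gives a combination of norm `< 1`.
-/

def SelectivelyBalancing {n m : ℕ} (u : Fin m → EuclideanSpace ℝ (Fin n)) : Prop :=
  ∃ ε : Fin m → ℝ, (∀ i, ε i = -1 ∨ ε i = 0 ∨ ε i = 1) ∧ ε ≠ 0 ∧
    ‖∑ i, ε i • u i‖ < 1

open Finset Real

def boolSign (b : Bool) : ℝ := if b then 1 else -1

lemma boolSign_mul_self (b : Bool) : boolSign b * boolSign b = 1 := by
  cases b <;> norm_num [boolSign]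

lemma boolSign_not (b : Bool) : boolSign (!b) = -boolSign b := by
  cases b <;> norm_num [boolSign]

lemma boolSign_injective : Function.Injective boolSign := by
  intro a b; cases a <;> cases b <;> norm_num [boolSign]

lemma boolSign_sub_boolSign_div_two_cases (a b : Bool) :
    (boolSign a - boolSign b) / 2 = -1 ∨ (boolSign a - boolSign b) / 2 = 0 ∨
      (boolSign a - boolSign b) / 2 = 1 := by
  cases a <;> cases b <;> norm_num [boolSign]

def signedSum {ι E : Type*} [Fintype ι] [AddCommMonoid E] [Module ℝ E] (u : ι → E)
    (σ : ι → Bool) : E :=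
  ∑ i, boolSign (σ i) • u i

section SignedSum

variable {ι E : Type*} [Fintype ι] [DecidableEq ι] [NormedAddCommGroup E] [InnerProductSpace ℝ E]

lemma sum_boolSign_mul_boolSign (i j : ι) :
    ∑ σ : ι → Bool, boolSign (σ i) * boolSign (σ j) =
      if i = j then 2 ^ Fintype.card ι else 0 := by
  split_ifs with hij
  · simp [hij, boolSign_mul_self]
  -- flipping the `i`-th sign negates every term
  have hflip : Function.Involutive fun σ : ι → Bool => Function.update σ i !(σ i) := fun σ => by
    ext k; by_cases hk : k = i <;> simp [hk]
  have hneg := Fintype.sum_bijective _ hflip.bijective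
    (fun σ => boolSign (σ i) * boolSign (σ j)) (fun σ => -(boolSign (σ i) * boolSign (σ j)))
    fun σ => by simp [boolSign_not, Function.update_of_ne (Ne.symm hij)]
  rw [sum_neg_distrib] at hneg
  linarith

lemma sum_norm_sq_signedSum (u : ι → E) :
    ∑ σ, ‖signedSum u σ‖ ^ 2 = 2 ^ Fintype.card ι * ∑ i, ‖u i‖ ^ 2 := by
  have hexpand (σ : ι → Bool) : ‖signedSum u σ‖ ^ 2 =
      ∑ i, ∑ j, boolSign (σ i) * (boolSign (σ j) * inner ℝ (u j) (u i)) := by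
    simp only [← real_inner_self_eq_norm_sq, signedSum, sum_inner, inner_sum,
      real_inner_smul_left, real_inner_smul_right]
  calc ∑ σ, ‖signedSum u σ‖ ^ 2
      = ∑ i, ∑ j, (∑ σ : ι → Bool, boolSign (σ i) * boolSign (σ j)) * inner ℝ (u j) (u i) := by
        simp_rw [hexpand, sum_mul, mul_assoc]
        rw [sum_comm]
        exact sum_congr rfl fun i _ => sum_comm
    _ = ∑ i, 2 ^ Fintype.card ι * ‖u i‖ ^ 2 := by
        simp [sum_boolSign_mul_boolSign]
    _ = _ := (mul_sum ..).symm

lemma le_card_filter_norm_sq_signedSum_le (u : ι → E) (hu : 0 < ∑ i, ‖u i‖ ^ 2) :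
    (3 / 4 : ℝ) * 2 ^ Fintype.card ι ≤
      #{σ | ‖signedSum u σ‖ ^ 2 ≤ 4 * ∑ i, ‖u i‖ ^ 2} := by
  set S := ∑ i, ‖u i‖ ^ 2
  set bad : Finset (ι → Bool) := {σ | ¬ ‖signedSum u σ‖ ^ 2 ≤ 4 * S}
  have hmarkov : (#bad : ℝ) * (4 * S) ≤ 2 ^ Fintype.card ι * S :=
    calc (#bad : ℝ) * (4 * S) ≤ ∑ σ ∈ bad, ‖signedSum u σ‖ ^ 2 := by
          rw [← nsmul_eq_mul]
          exact card_nsmul_le_sum _ _ _ fun σ hσ => (not_le.mp (mem_filter.mp hσ).2).le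
      _ ≤ ∑ σ, ‖signedSum u σ‖ ^ 2 :=
          sum_le_sum_of_subset_of_nonneg (subset_univ _) fun _ _ _ => by positivity
      _ = 2 ^ Fintype.card ι * S := sum_norm_sq_signedSum u
  have hbad : (#bad : ℝ) * 4 ≤ 2 ^ Fintype.card ι := by nlinarith
  have hsplit : (#{σ | ‖signedSum u σ‖ ^ 2 ≤ 4 * S} : ℝ) + #bad = 2 ^ Fintype.card ι := by
    exact_mod_cast (card_filter_add_card_filter_not _).trans (by simp)
  linarith

end SignedSum

lemma selectivelyBalancing_of_norm_signedSum_sub_lt_two {n m : ℕ}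
    {u : Fin m → EuclideanSpace ℝ (Fin n)} {σ τ : Fin m → Bool} (hστ : σ ≠ τ)
    (h : ‖signedSum u σ - signedSum u τ‖ < 2) : SelectivelyBalancing u := by
  refine ⟨fun i => (boolSign (σ i) - boolSign (τ i)) / 2,
    fun i => boolSign_sub_boolSign_div_two_cases _ _, fun h0 => hστ ?_, ?_⟩
  · ext i
    have := congrFun h0 i
    simp only [Pi.zero_apply] at this
    exact boolSign_injective (by linarith)
  · have : ∑ i, ((boolSign (σ i) - boolSign (τ i)) / 2) • u i =
        (2 : ℝ)⁻¹ • (signedSum u σ - signedSum u τ) := by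
      simp only [signedSum, ← sum_sub_distrib, smul_sum, div_eq_inv_mul, mul_smul, sub_smul]
    rw [this, norm_smul]
    norm_num
    linarith

lemma Nat.choose_le_exp_mul_div_pow (N k : ℕ) : (N.choose k : ℝ) ≤ (exp 1 * N / k) ^ k := by
  rcases k.eq_zero_or_pos with rfl | hk
  · simp
  have hkk : (k : ℝ) ^ k / k.factorial ≤ exp 1 ^ k := by
    simpa [← exp_nat_mul] using pow_div_factorial_le_exp (x := (k : ℝ)) (by positivity) k
  calc (N.choose k : ℝ) ≤ N ^ k / k.factorial := Nat.choose_le_pow_div k N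
    _ = (N / k) ^ k * ((k : ℝ) ^ k / k.factorial) := by
        rw [div_pow]; field_simp
    _ ≤ (N / k) ^ k * exp 1 ^ k := by gcongr
    _ = (exp 1 * N / k) ^ k := by ring

lemma card_le_choose_of_sum_le {n M : ℕ} {s : Finset (Fin n → ℕ)}
    (hs : ∀ b ∈ s, ∑ j, b j ≤ M) : #s ≤ (M + n).choose n := by
  -- stars and bars: prepending the slack `M - ∑ b` gives an `M`-multiset on `Fin (n + 1)`
  have hslack (b : Fin n → ℕ) (hb : b ∈ s) :
      ∑ j, (Fin.cons (M - ∑ j, b j) b : Fin (n + 1) → ℕ) j = M := by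
    rw [Fin.sum_cons]; have := hs b hb; omega
  calc #s ≤ #(univ : Finset (Sym (Fin (n + 1)) M)) := by
        refine card_le_card_of_injOn
          (fun b => if hb : b ∈ s then (Sym.equivNatSumOfFintype _ M).symm ⟨_, hslack b hb⟩
            else default) (by simp) ?_
        intro b hb b' hb' hbb'
        simp only [mem_coe] at hb hb'
        simp only [hb, hb', dite_true, EmbeddingLike.apply_eq_iff_eq, Subtype.mk.injEq] at hbb'
        exact (Fin.cons_injective2 hbb').2
    _ = (M + n).choose n := by
        rw [card_univ, Sym.card_sym_eq_choose, Fintype.card_fin,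
          show n + 1 + M - 1 = M + n by omega, Nat.choose_symm_add]

lemma Equiv.intEquivNat_floor_le (y : ℝ) : (Equiv.intEquivNat ⌊y⌋ : ℝ) ≤ 2 * |y| + 1 := by
  have hlo := Int.floor_le y
  have hhi := Int.lt_floor_add_one y
  -- `intEquivNat` sends `k` to `2k` and `-(k + 1)` to `2k + 1`
  cases h : ⌊y⌋ with
  | ofNat k =>
    change ((2 * k : ℕ) : ℝ) ≤ _
    rw [h, Int.ofNat_eq_natCast, Int.cast_natCast] at hlo
    push_cast
    linarith [le_abs_self y]
  | negSucc k =>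
    change ((2 * k + 1 : ℕ) : ℝ) ≤ _
    rw [h, Int.cast_negSucc] at hhi
    push_cast at hhi ⊢
    linarith [neg_le_abs y]

namespace EuclideanSpace

variable {ι : Type*} [Fintype ι]

lemma sum_abs_le_sqrt_card_mul_norm (x : EuclideanSpace ℝ ι) :
    ∑ i, |x i| ≤ √(Fintype.card ι) * ‖x‖ :=
  calc ∑ i, |x i| ≤ √(Fintype.card ι * ‖x‖ ^ 2) := by
        refine le_sqrt_of_sq_le ?_
        simpa [real_norm_sq_eq, sq_abs] using sq_sum_le_card_mul_sum_sq (s := univ) (f := (|x ·|))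
    _ = √(Fintype.card ι) * ‖x‖ := by rw [sqrt_mul (by positivity), sqrt_sq (norm_nonneg _)]

lemma norm_sub_lt_of_floor_eq [Nonempty ι] {r : ℝ} (hr : 0 < r) {x y : EuclideanSpace ℝ ι}
    (h : ∀ i, ⌊r * x i⌋ = ⌊r * y i⌋) : ‖x - y‖ < √(Fintype.card ι) / r := by
  have hcoord (i : ι) : (x i - y i) ^ 2 < (1 / r) ^ 2 := by
    have := Int.abs_sub_lt_one_of_floor_eq_floor (h i)
    rw [← mul_sub, abs_mul, abs_of_pos hr, ← lt_div_iff₀' hr] at this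
    exact sq_lt_sq' (by linarith [neg_abs_le (x i - y i)]) (by linarith [le_abs_self (x i - y i)])
  refine lt_of_pow_lt_pow_left₀ 2 (by positivity) ?_
  calc ‖x - y‖ ^ 2 = ∑ i, (x i - y i) ^ 2 := by simp [real_norm_sq_eq]
    _ < ∑ _i : ι, (1 / r) ^ 2 := sum_lt_sum_of_nonempty univ_nonempty fun i _ => hcoord i
    _ = (√(Fintype.card ι) / r) ^ 2 := by
        rw [sum_const, card_univ, nsmul_eq_mul, div_pow, div_pow, sq_sqrt (by positivity)]
        ring

lemma sum_intEquivNat_floor_le {r : ℝ} (hr : 0 ≤ r) (x : EuclideanSpace ℝ ι) :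
    ∑ i, (Equiv.intEquivNat ⌊r * x i⌋ : ℝ) ≤ 2 * r * √(Fintype.card ι) * ‖x‖ + Fintype.card ι :=
  calc ∑ i, (Equiv.intEquivNat ⌊r * x i⌋ : ℝ) ≤ ∑ i, (2 * r * |x i| + 1) := by
        gcongr with i
        simpa [abs_mul, abs_of_nonneg hr, mul_assoc] using Equiv.intEquivNat_floor_le (r * x i)
    _ = 2 * r * ∑ i, |x i| + Fintype.card ι := by simp [sum_add_distrib, mul_sum]
    _ ≤ 2 * r * √(Fintype.card ι) * ‖x‖ + Fintype.card ι := by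
        rw [mul_assoc (2 * r)]
        gcongr
        exact sum_abs_le_sqrt_card_mul_norm x

theorem exists_ne_norm_sub_lt_two_of_card_lt {α : Type*} {n : ℕ} (hn : 0 < n) {s : Finset α}
    {v : α → EuclideanSpace ℝ (Fin n)} {R : ℝ} (hR : 0 ≤ R) (hv : ∀ a ∈ s, ‖v a‖ ≤ R)
    (hs : (exp 1 * (R + 2)) ^ n < #s) : ∃ a ∈ s, ∃ b ∈ s, a ≠ b ∧ ‖v a - v b‖ < 2 := by
  have : Nonempty (Fin n) := Fin.pos_iff_nonempty.mp hn
  have hn' : (0 : ℝ) < n := by exact_mod_cast hn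
  -- cubes of side `2 / √n`, hence of diameter `2`, indexed by `ℕ`-vectors via `ℤ ≃ ℕ`
  set r := √n / 2
  let cell (a : α) : Fin n → ℕ := fun j => Equiv.intEquivNat ⌊r * v a j⌋
  set M := ⌊n * R + n⌋₊
  have hcell_sum (a : α) (ha : a ∈ s) : ∑ j, cell a j ≤ M := by
    refine Nat.le_floor ?_
    calc ((∑ j, cell a j : ℕ) : ℝ) ≤ 2 * r * √n * ‖v a‖ + n := by
          push_cast
          simpa using sum_intEquivNat_floor_le (by positivity) (v a)
      _ = n * ‖v a‖ + n := by rw [mul_div_cancel₀ _ two_ne_zero, ← sq, sq_sqrt hn'.le]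
      _ ≤ n * R + n := by gcongr; exact hv a ha
  have hM : ((M + n : ℕ) : ℝ) / n ≤ R + 2 := by
    rw [div_le_iff₀ hn']
    push_cast
    linarith [Nat.floor_le (by positivity : (0 : ℝ) ≤ n * R + n)]
  have hcard : (#(s.image cell) : ℝ) < #s :=
    calc (#(s.image cell) : ℝ) ≤ (M + n).choose n := by
          exact_mod_cast card_le_choose_of_sum_le (by simpa using hcell_sum)
      _ ≤ (exp 1 * (M + n : ℕ) / n) ^ n := Nat.choose_le_exp_mul_div_pow _ _
      _ ≤ (exp 1 * (R + 2)) ^ n := by rw [mul_div_assoc]; gcongr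
      _ < #s := hs
  obtain ⟨a, ha, b, hb, hab, hcell⟩ :=
    exists_ne_map_eq_of_card_lt_of_maps_to (by exact_mod_cast hcard) fun a ha =>
      mem_image_of_mem cell ha
  refine ⟨a, ha, b, hb, hab, ?_⟩
  calc ‖v a - v b‖ < √(Fintype.card (Fin n)) / r :=
        norm_sub_lt_of_floor_eq (by positivity)
          fun j => Equiv.intEquivNat.injective (congrFun hcell j)
    _ = 2 := by rw [Fintype.card_fin, div_div_cancel₀ (by positivity)]

end EuclideanSpace

lemma two_rpow_le_of_le_four {x : ℝ} (hx0 : 0 ≤ x) (hx4 : x ≤ 4) : (2 : ℝ) ^ x ≤ 1 + 15 / 4 * x :=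
  calc (2 : ℝ) ^ x = (1 + 15) ^ (x / 4) := by
        rw [show (1 + 15 : ℝ) = 2 ^ (4 : ℝ) by norm_num, ← rpow_mul (by norm_num)]
        ring_nf
    _ ≤ 1 + x / 4 * 15 :=
        rpow_one_add_le_one_add_mul_self (by norm_num) (by positivity) (by linarith)
    _ = 1 + 15 / 4 * x := by ring

lemma two_pow_le_of_le_four_mul {n m : ℕ} (hn : 0 < n) (hm : (m : ℝ) ≤ 4 * n) :
    (2 : ℝ) ^ m ≤ (exp 1 * ((m : ℝ) / n + 2) * √(n + 1)) ^ n := by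
  have hn' : (0 : ℝ) < n := by exact_mod_cast hn
  set x := (m : ℝ) / n
  have hx0 : 0 ≤ x := by positivity
  have hx4 : x ≤ 4 := by rwa [div_le_iff₀ hn']
  have hexp : (2 : ℝ) ^ m = ((2 : ℝ) ^ x) ^ n := by
    rw [← rpow_mul_natCast (by norm_num), div_mul_cancel₀ _ hn'.ne', rpow_natCast]
  have hsqrt : 1.4 ≤ √((n : ℝ) + 1) := by
    have : (1 : ℝ) ≤ n := by exact_mod_cast hn
    exact le_sqrt_of_sq_le (by norm_num; linarith)
  rw [hexp]
  gcongr
  calc (2 : ℝ) ^ x ≤ 1 + 15 / 4 * x := two_rpow_le_of_le_four hx0 hx4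
    _ ≤ 2.7 * 1.4 * (x + 2) := by linarith
    _ ≤ exp 1 * √(n + 1) * (x + 2) := by gcongr; exact exp_one_gt_d9.le.trans' (by norm_num)
    _ = exp 1 * (x + 2) * √(n + 1) := by ring

lemma two_mul_sqrt_add_two_le {m n : ℝ} (hn : 0 < n) (hm : 4 * n ≤ m) :
    2 * √m + 2 ≤ 3 / 4 * ((m / n + 2) * √(n + 1)) := by
  -- squared, this is `17 n - 64 √n + 65 ≥ 0`, a quadratic in `√n` with negative discriminant
  have hsqrt_succ : 8 * √n + 4 ≤ 9 * √(n + 1) := by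
    nlinarith [sq_sqrt hn.le, sq_sqrt (by linarith : 0 ≤ n + 1), sqrt_nonneg n,
      sqrt_nonneg (n + 1), sq_nonneg (17 * √n - 32)]
  have hsqrt_m : 2 * √n ≤ √m := le_sqrt_of_sq_le (by rw [mul_pow, sq_sqrt hn.le]; linarith)
  have hamgm : 3 * √n * √m ≤ m + 2 * n := by
    have := mul_nonneg (sub_nonneg.2 (by linarith [sqrt_nonneg n] : √n ≤ √m)) (sub_nonneg.2 hsqrt_m)
    nlinarith [mul_self_sqrt hn.le, mul_self_sqrt (by linarith : 0 ≤ m)]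
  have hrhs : 3 / 4 * ((m / n + 2) * √(n + 1)) = 3 / 4 * (m + 2 * n) * √(n + 1) / n := by
    field_simp
  rw [hrhs, le_div_iff₀ hn]
  have hn_sq : √n * √n = n := mul_self_sqrt hn.le
  calc (2 * √m + 2) * n = (2 * √n * (3 * √n * √m) + 6 * n) / 3 := by
        linear_combination (-2 * √m) * hn_sq
    _ ≤ (2 * √n * (m + 2 * n) + (m + 2 * n)) / 3 := by gcongr; linarith
    _ = 3 / 4 * (m + 2 * n) * ((8 * √n + 4) / 9) := by ring
    _ ≤ 3 / 4 * (m + 2 * n) * √(n + 1) := by gcongr <;> linarith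

lemma exp_one_mul_two_mul_sqrt_add_two_pow_lt {n m : ℕ} (hn : 0 < n) (hm : 4 * (n : ℝ) ≤ m)
    (h : (exp 1 * ((m : ℝ) / n + 2) * √(n + 1)) ^ n < 2 ^ m) :
    (exp 1 * (2 * √m + 2)) ^ n < 3 / 4 * 2 ^ m :=
  calc (exp 1 * (2 * √m + 2)) ^ n ≤ (exp 1 * (3 / 4 * ((m / n + 2) * √(n + 1)))) ^ n := by
        gcongr
        exact two_mul_sqrt_add_two_le (by positivity) hm
    _ = (3 / 4) ^ n * (exp 1 * ((m : ℝ) / n + 2) * √(n + 1)) ^ n := by rw [← mul_pow]; ring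
    _ ≤ 3 / 4 * (exp 1 * ((m : ℝ) / n + 2) * √(n + 1)) ^ n := by
        gcongr
        exact pow_le_of_le_one (by norm_num) (by norm_num) hn.ne'
    _ < 3 / 4 * 2 ^ m := by gcongr

/-- if `2^m > (e(m/n + 2)√(n+1))^n` then any `m` unit vectors in
`ℝ^n` are selectively balancing. -/
theorem selBal_of_counting {n m : ℕ} (hn : 0 < n)
    (h : (Real.exp 1 * ((m : ℝ) / n + 2) * Real.sqrt (n + 1)) ^ n < 2 ^ m)
    (u : Fin m → EuclideanSpace ℝ (Fin n)) (hu : ∀ i, ‖u i‖ = 1) :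
    SelectivelyBalancing u := by
  rcases le_or_gt (m : ℝ) (4 * n) with hsmall | hlarge
  · exact absurd h (two_pow_le_of_le_four_mul hn hsmall).not_gt
  have hsum : ∑ i, ‖u i‖ ^ 2 = m := by simp [hu]
  set good := ({σ | ‖signedSum u σ‖ ^ 2 ≤ 4 * ∑ i, ‖u i‖ ^ 2} : Finset (Fin m → Bool))
  have hgood : (3 / 4 : ℝ) * 2 ^ m ≤ #good := by
    simpa using le_card_filter_norm_sq_signedSum_le u (by rw [hsum]; linarith)
  have hbound (σ) (hσ : σ ∈ good) : ‖signedSum u σ‖ ≤ 2 * √m := by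
    rw [mem_filter, hsum] at hσ
    refine (sq_le_sq₀ (norm_nonneg _) (by positivity)).mp ?_
    rw [mul_pow, sq_sqrt m.cast_nonneg]
    linarith [hσ.2]
  obtain ⟨σ, -, τ, -, hστ, hclose⟩ :=
    EuclideanSpace.exists_ne_norm_sub_lt_two_of_card_lt hn (by positivity) hbound
      ((exp_one_mul_two_mul_sqrt_add_two_pow_lt hn hlarge.le h).trans_le hgood)
  exact selectivelyBalancing_of_norm_signedSum_sub_lt_two hστ hclose
end

section
/- Identify the coordinates of R^{25} with the lattice points of the 5×5 grid {1,…,5}². Let U consist of the 25 standard basis vectors e_{(a,b)}, together with, for each interior point (a,b) ∈ {2,3,4}², the vector (1/2)(e_{(a−1,b)} + e_{(a+1,b)} + e_{(a,b−1)} + e_{(a,b+1)}). Then every vector in U is a unit vector and U is not selectively balancing: every nontrivial {−1,0,1}-combination of vectors in U has Euclidean norm at least 1. -/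
/-!
All vectors of `U` have coordinates in `½ℤ`, so for a `{-1, 0, 1}`-combination `v` the vector
`2v` is integral and it suffices to show `‖2v‖² ≥ 4`. If only basis vectors occur, some
coordinate of `2v` is `±2`. Otherwise, mod 2, the coordinate `(2v)_p` is odd exactly when `p`
is a neighbour of an odd number of the interior points that occur; the neighbour sets span a
binary code of minimum weight 4 (checked over all `2⁹` subsets), so at least four coordinates
of `2v` are odd.
-/

open Fin.NatCast in
/-- The 34 unit vectors of the example: the 25 standard basis vectors of
`ℝ^{5×5}`, plus, for each interior point of the `5×5` grid (indexed by
`(a,b) ∈ Fin 3 × Fin 3`, the interior point being `(a+1, b+1)` in `Fin 5`),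
half the sum of the four basis vectors of its grid neighbours. -/
noncomputable def exampleVec :
    (Fin 5 × Fin 5) ⊕ (Fin 3 × Fin 3) → EuclideanSpace ℝ (Fin 5 × Fin 5)
  | Sum.inl p => EuclideanSpace.single p 1
  | Sum.inr (a, b) => (1 / 2 : ℝ) •
      (EuclideanSpace.single (((a.val : ℕ) : Fin 5), ((b.val + 1 : ℕ) : Fin 5)) 1 +
       EuclideanSpace.single (((a.val + 2 : ℕ) : Fin 5), ((b.val + 1 : ℕ) : Fin 5)) 1 +
       EuclideanSpace.single (((a.val + 1 : ℕ) : Fin 5), ((b.val : ℕ) : Fin 5)) 1 +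
       EuclideanSpace.single (((a.val + 1 : ℕ) : Fin 5), ((b.val + 2 : ℕ) : Fin 5)) 1)

open Finset

theorem Int.odd_sum_iff_odd_card_odd {ι : Type*} (s : Finset ι) (f : ι → ℤ) :
    Odd (∑ i ∈ s, f i) ↔ Odd #{i ∈ s | Odd (f i)} := by
  have h : Even (∑ i ∈ s, f i - ((∑ i ∈ s, (f i).natAbs : ℕ) : ℤ)) := by
    rw [Nat.cast_sum, ← sum_sub_distrib]
    refine even_sum _ fun i _ => ?_
    rw [Int.even_sub, Int.even_coe_nat, Int.natAbs_even]
  rw [← Int.not_even_iff_odd, Int.even_sub.mp h, Int.even_coe_nat, Nat.not_even_iff_odd,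
    Finset.odd_sum_iff_odd_card_odd]
  simp_rw [Int.natAbs_odd]

theorem Int.one_le_sq_of_odd {z : ℤ} (hz : Odd z) : 1 ≤ z ^ 2 :=
  (one_le_sq_iff_one_le_abs z).mpr (Int.one_le_abs fun h => by simp [h] at hz)

theorem EuclideanSpace.one_le_norm_of_two_mul_eq_intCast {ι : Type*} [Fintype ι]
    (v : EuclideanSpace ℝ ι) (z : ι → ℤ) (hz : ∀ p, 2 * v p = z p) (h : 4 ≤ ∑ p, z p ^ 2) :
    1 ≤ ‖v‖ := by
  have hsq : ‖v‖ ^ 2 = (∑ p, z p ^ 2 : ℤ) / 4 := by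
    rw [EuclideanSpace.real_norm_sq_eq]
    push_cast
    rw [sum_div]
    exact sum_congr rfl fun p _ => by rw [← hz p]; ring
  have h4 : (4 : ℝ) ≤ (∑ p, z p ^ 2 : ℤ) := by exact_mod_cast h
  nlinarith [norm_nonneg v]

open Fin.NatCast in
def gridNeighbours (r : Fin 3 × Fin 3) : Finset (Fin 5 × Fin 5) :=
  {(((r.1.val : ℕ) : Fin 5), ((r.2.val + 1 : ℕ) : Fin 5)),
   (((r.1.val + 2 : ℕ) : Fin 5), ((r.2.val + 1 : ℕ) : Fin 5)),
   (((r.1.val + 1 : ℕ) : Fin 5), ((r.2.val : ℕ) : Fin 5)),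
   (((r.1.val + 1 : ℕ) : Fin 5), ((r.2.val + 2 : ℕ) : Fin 5))}

theorem exampleVec_inr (r : Fin 3 × Fin 3) :
    exampleVec (.inr r) = (1 / 2 : ℝ) • ∑ q ∈ gridNeighbours r, EuclideanSpace.single q 1 := by
  rw [gridNeighbours, sum_insert, sum_insert, sum_insert, sum_singleton]
  · simp only [exampleVec, add_assoc]
  all_goals revert r; decide

theorem card_gridNeighbours (r : Fin 3 × Fin 3) : #(gridNeighbours r) = 4 := by
  revert r; decide

theorem exampleVec_inl_apply (q p : Fin 5 × Fin 5) :
    exampleVec (.inl q) p = if p = q then 1 else 0 := by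
  simp [exampleVec, PiLp.single_apply]

theorem exampleVec_inr_apply (r : Fin 3 × Fin 3) (p : Fin 5 × Fin 5) :
    exampleVec (.inr r) p = if p ∈ gridNeighbours r then 1 / 2 else 0 := by
  simp [exampleVec_inr]

theorem norm_exampleVec : ∀ i, ‖exampleVec i‖ = 1
  | .inl p => by simp [exampleVec]
  | .inr r => by
    rw [EuclideanSpace.norm_eq, Real.sqrt_eq_one]
    simp [exampleVec_inr_apply, card_gridNeighbours]
    norm_num

set_option maxRecDepth 100000 in
theorem four_le_card_odd_card_neighbours : ∀ S : Finset (Fin 3 × Fin 3), S.Nonempty →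
    4 ≤ #{p | Odd #{r ∈ S | p ∈ gridNeighbours r}} := by
  decide

section SignedCombination

variable (n : (Fin 5 × Fin 5) ⊕ (Fin 3 × Fin 3) → ℤ)

def twiceCoord (p : Fin 5 × Fin 5) : ℤ :=
  2 * n (.inl p) + ∑ r with p ∈ gridNeighbours r, n (.inr r)

theorem two_mul_sum_smul_exampleVec_apply (p : Fin 5 × Fin 5) :
    2 * (∑ i, (n i : ℝ) • exampleVec i) p = twiceCoord n p := by
  have hcoord : (∑ i, (n i : ℝ) • exampleVec i) p = ∑ i, (n i : ℝ) * exampleVec i p := by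
    simp [WithLp.ofLp_sum]
  rw [hcoord, Fintype.sum_sum_type]
  simp [twiceCoord, exampleVec_inl_apply, exampleVec_inr_apply, mul_add, mul_sum, sum_filter]
  exact sum_congr rfl fun r _ => by split_ifs <;> ring

variable {n}

theorem odd_twiceCoord_iff (hn : ∀ i, n i = -1 ∨ n i = 0 ∨ n i = 1) (p : Fin 5 × Fin 5) :
    Odd (twiceCoord n p) ↔ Odd #{r ∈ {r | n (.inr r) ≠ 0} | p ∈ gridNeighbours r} := by
  have hodd : ∀ i, Odd (n i) ↔ n i ≠ 0 := fun i => by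
    rcases hn i with h | h | h <;> simp [h]
  rw [twiceCoord, Int.odd_add', Int.odd_sum_iff_odd_card_odd, filter_filter, filter_filter]
  simp [hodd, and_comm]

theorem four_le_sum_sq_twiceCoord (hn : ∀ i, n i = -1 ∨ n i = 0 ∨ n i = 1) (hne : n ≠ 0) :
    4 ≤ ∑ p, twiceCoord n p ^ 2 := by
  by_cases hinr : ∀ r, n (.inr r) = 0
  · obtain ⟨p, hp⟩ : ∃ p, n (.inl p) ≠ 0 := by
      by_contra! hinl
      exact hne (funext fun | .inl p => hinl p | .inr r => hinr r)
    calc 4 ≤ twiceCoord n p ^ 2 := by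
          rcases hn (.inl p) with h | h | h <;> simp_all [twiceCoord]
      _ ≤ ∑ p, twiceCoord n p ^ 2 := single_le_sum (fun _ _ => sq_nonneg _) (mem_univ p)
  · obtain ⟨r, hr⟩ := not_forall.mp hinr
    set T := ({p | Odd #{r ∈ {r | n (.inr r) ≠ 0} | p ∈ gridNeighbours r}} : Finset _)
    calc (4 : ℤ) ≤ #T := by exact_mod_cast four_le_card_odd_card_neighbours _ ⟨r, by simpa⟩
      _ = ∑ p ∈ T, 1 := by simp
      _ ≤ ∑ p ∈ T, twiceCoord n p ^ 2 := sum_le_sum fun p hp =>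
          Int.one_le_sq_of_odd ((odd_twiceCoord_iff hn p).mpr (mem_filter.mp hp).2)
      _ ≤ ∑ p, twiceCoord n p ^ 2 :=
          sum_le_sum_of_subset_of_nonneg (subset_univ T) fun _ _ _ => sq_nonneg _

end SignedCombination

/-- the 34 vectors above are unit vectors and are not
selectively balancing. -/
theorem example_not_selBal :
    (∀ i, ‖exampleVec i‖ = 1) ∧
    ∀ ε : (Fin 5 × Fin 5) ⊕ (Fin 3 × Fin 3) → ℝ,
      (∀ i, ε i = -1 ∨ ε i = 0 ∨ ε i = 1) → ε ≠ 0 →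
      1 ≤ ‖∑ i, ε i • exampleVec i‖ := by
  refine ⟨norm_exampleVec, fun ε hε hne => ?_⟩
  have hlift : ∀ i, ∃ k : ℤ, (k = -1 ∨ k = 0 ∨ k = 1) ∧ (k : ℝ) = ε i := fun i => by
    rcases hε i with h | h | h <;> rw [h]
    exacts [⟨-1, by norm_num⟩, ⟨0, by norm_num⟩, ⟨1, by norm_num⟩]
  choose n hn hnε using hlift
  obtain rfl : ε = fun i => (n i : ℝ) := funext fun i => (hnε i).symm
  refine EuclideanSpace.one_le_norm_of_two_mul_eq_intCast _ _
    (two_mul_sum_smul_exampleVec_apply n)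
    (four_le_sum_sq_twiceCoord hn fun h => hne (funext fun i => by simp [h]))
end

section
/- With the construction as given (S ⊂ Z^d of size 4^k with common Euclidean norm, r = max ‖u‖_∞ over u ∈ S, L > 2r, chain S_0 ⊂ ⋯ ⊂ S_k with |S_i| = 4^i, and unit vectors u_{t,i} = 2^{−i} ∑_{y∈S_i} e_{t+y} for t ∈ [1+r, L−r]^d ∩ Z^d), the resulting set of (k+1)(L−2r)^d unit vectors in R^{L^d} is not selectively balancing: every nontrivial {−1,0,1}-combination has Euclidean norm at least 1. -/
/-!
Let `m` be the highest level with a nonzero coefficient and `A` the set of translates active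
at level `m`. Since `S_m` lies on a sphere, for each `y₀ ∈ S_m` the translate `t₀ ∈ A`
maximizing `⟪y₀, t₀⟫` is the only way to write `t₀ + y₀` as a point of `A + S_m` (a lonely
point). At that coordinate `2^m` times the combination is `±1` plus even contributions of the
lower levels, so the coordinate has absolute value at least `2^{-m}`. These `4^m` coordinates
are distinct, giving squared norm at least `1`. The translates stay inside `[1, L]^d`, where
reduction mod `L` is injective.
-/

open Finset

theorem ZMod.intCast_injOn_Ico (L : ℕ) (a : ℤ) :
    Set.InjOn (fun x : ℤ => (x : ZMod L)) (Set.Ico a (a + L)) := by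
  intro x hx y hy h
  have hdvd := (ZMod.intCast_eq_intCast_iff_dvd_sub x y L).1 h
  rw [Set.mem_Ico] at hx hy
  exact (Int.eq_of_sub_eq_zero (Int.eq_zero_of_abs_lt_dvd hdvd (by rw [abs_lt]; omega))).symm

section DotProduct

variable {ι R : Type*} [Fintype ι] [CommRing R] [LinearOrder R] [IsStrictOrderedRing R]

theorem eq_and_eq_of_add_eq_add_of_dotProduct_le {t y t₀ y₀ : ι → R}
    (hnorm : y ⬝ᵥ y = y₀ ⬝ᵥ y₀) (hmax : y₀ ⬝ᵥ t ≤ y₀ ⬝ᵥ t₀) (h : t + y = t₀ + y₀) :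
    t = t₀ ∧ y = y₀ := by
  -- with `y = y₀ + w`: equal norms give `w ⬝ᵥ w = -2 (y₀ ⬝ᵥ w)`, maximality gives `0 ≤ y₀ ⬝ᵥ w`
  obtain ⟨w, rfl⟩ : ∃ w, y = y₀ + w := ⟨y - y₀, by abel⟩
  have ht : t = t₀ - w := by rw [← add_sub_cancel_right t (y₀ + w), h]; abel
  subst ht
  have hw : w ⬝ᵥ w ≤ 0 := by
    simp only [add_dotProduct, dotProduct_add, dotProduct_sub, dotProduct_comm w y₀] at hnorm hmax
    linarith
  have hw0 : w = 0 := dotProduct_self_eq_zero.1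
    (le_antisymm hw (sum_nonneg fun i _ => mul_self_nonneg (w i)))
  simp [hw0]

theorem exists_lonely_translate {A : Finset (ι → R)} (hA : A.Nonempty) {Y : Set (ι → R)}
    {y₀ : ι → R} (hY : ∀ y ∈ Y, y ⬝ᵥ y = y₀ ⬝ᵥ y₀) :
    ∃ t₀ ∈ A, ∀ t ∈ A, ∀ y ∈ Y, t + y = t₀ + y₀ → t = t₀ ∧ y = y₀ := by
  obtain ⟨t₀, ht₀, hmax⟩ := A.exists_max_image (y₀ ⬝ᵥ ·) hA
  exact ⟨t₀, ht₀, fun t ht y hy h =>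
    eq_and_eq_of_add_eq_add_of_dotProduct_le (hY y hy) (hmax t ht) h⟩

end DotProduct

theorem dotProduct_self_eq_of_sqrt_sum_sq_eq {ι : Type*} [Fintype ι] {y y' : ι → ℤ}
    (h : √(∑ j, (y j : ℝ) ^ 2) = √(∑ j, (y' j : ℝ) ^ 2)) : y ⬝ᵥ y = y' ⬝ᵥ y' := by
  rw [Real.sqrt_inj (by positivity) (by positivity)] at h
  have hcast : ((y ⬝ᵥ y : ℤ) : ℝ) = (y' ⬝ᵥ y' : ℤ) := by
    push_cast [dotProduct]
    simpa [sq] using h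
  exact_mod_cast hcast

theorem exists_lonely_translate_mod {ι : Type*} [Fintype ι] (L : ℕ) (a : ℤ)
    {A Y : Finset (ι → ℤ)} (hA : A.Nonempty) {y₀ : ι → ℤ} (hy₀ : y₀ ∈ Y)
    (hY : ∀ y ∈ Y, y ⬝ᵥ y = y₀ ⬝ᵥ y₀)
    (hbox : ∀ t ∈ A, ∀ y ∈ Y, ∀ j, t j + y j ∈ Set.Ico a (a + L)) :
    ∃ t₀ ∈ A, ∀ t ∈ A, ∀ y ∈ Y,
      (fun j => ((t j + y j : ℤ) : ZMod L)) = (fun j => ((t₀ j + y₀ j : ℤ) : ZMod L)) →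
        t = t₀ ∧ y = y₀ := by
  obtain ⟨t₀, ht₀, hlonely⟩ := exists_lonely_translate hA (Y := Y) hY
  exact ⟨t₀, ht₀, fun t ht y hy h => hlonely t ht y hy <| funext fun j =>
    ZMod.intCast_injOn_Ico L a (hbox t ht y hy j) (hbox t₀ ht₀ y₀ hy₀ j) (congrFun h j)⟩

theorem inv_two_pow_le_abs_sum_zpow_mul {k : ℕ} (a : Fin (k + 1) → ℤ) (m : Fin (k + 1))
    (hhigh : ∀ i, m < i → a i = 0) (hodd : Odd (a m)) :
    ((2 : ℝ) ^ (m : ℕ))⁻¹ ≤ |∑ i : Fin (k + 1), (2 : ℝ) ^ (-(i : ℤ)) * a i| := by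
  set N : ℤ := ∑ i : Fin (k + 1), 2 ^ ((m : ℕ) - (i : ℕ)) * a i with hN_def
  have hN : (2 : ℝ) ^ (m : ℕ) * ∑ i : Fin (k + 1), (2 : ℝ) ^ (-(i : ℤ)) * a i = N := by
    push_cast [N, mul_sum]
    refine sum_congr rfl fun i _ => ?_
    rcases le_or_gt i m with h | h
    · rw [← mul_assoc, ← zpow_natCast, ← zpow_natCast, ← zpow_add₀ two_ne_zero]
      congr 2
      push_cast [Fin.le_def.1 h]
      ring
    · simp [hhigh i h]
  have hNodd : Odd N := by
    rw [hN_def, ← add_sum_erase _ _ (mem_univ m), Nat.sub_self, pow_zero, one_mul]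
    refine hodd.add_even (even_iff_two_dvd.2 (dvd_sum fun i hi => ?_))
    rcases lt_or_gt_of_ne (ne_of_mem_erase hi) with h | h
    · exact dvd_mul_of_dvd_left (dvd_pow_self 2 (by omega)) _
    · simp [hhigh i h]
  have hN1 : (1 : ℝ) ≤ |(N : ℝ)| := by
    exact_mod_cast Int.one_le_abs (by rintro h; simp [h] at hNodd)
  rw [inv_le_iff_one_le_mul₀' (by positivity)]
  calc 1 ≤ |(N : ℝ)| := hN1
    _ = _ := by rw [← hN, abs_mul, abs_of_pos (by positivity)]

theorem exists_last_nonzero_index {τ ι M : Type*} [Fintype ι] [LinearOrder ι] [Zero M]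
    {T : Finset τ} {c : τ → ι → M} (h : ∃ t ∈ T, ∃ i, c t i ≠ 0) :
    ∃ m, (∃ t ∈ T, c t m ≠ 0) ∧ ∀ t ∈ T, ∀ i, m < i → c t i = 0 := by
  classical
  obtain ⟨t, ht, i, hi⟩ := h
  obtain ⟨⟨t, m⟩, hp, hmax⟩ := ((T ×ˢ univ).filter fun p : τ × ι => c p.1 p.2 ≠ 0)
    |>.exists_max_image Prod.snd ⟨(t, i), by simp [ht, hi]⟩
  simp only [mem_filter, mem_product, mem_univ, and_true] at hp hmax
  exact ⟨m, ⟨t, hp⟩, fun t' ht' i hi => by_contra fun hne => (hmax (t', i) ⟨ht', hne⟩).not_gt hi⟩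

theorem card_mul_sq_le_norm_sq {ι α : Type*} [Fintype ι] (v : EuclideanSpace ℝ ι)
    {s : Finset α} {f : α → ι} (hf : Set.InjOn f s) {c : ℝ} (hc : 0 ≤ c)
    (h : ∀ y ∈ s, c ≤ |v (f y)|) : #s * c ^ 2 ≤ ‖v‖ ^ 2 := by
  classical
  rw [EuclideanSpace.norm_sq_eq]
  calc #s * c ^ 2 = ∑ y ∈ s, c ^ 2 := by simp
    _ ≤ ∑ y ∈ s, ‖v (f y)‖ ^ 2 := sum_le_sum fun y hy => by
        rw [Real.norm_eq_abs]; exact pow_le_pow_left₀ hc (h y hy) 2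
    _ = ∑ x ∈ s.image f, ‖v x‖ ^ 2 := by rw [sum_image hf]
    _ ≤ ∑ x, ‖v x‖ ^ 2 := sum_le_sum_of_subset_of_nonneg (subset_univ _) fun _ _ _ => by positivity

section Combination

variable {τ β κ : Type*} [DecidableEq κ] {k : ℕ}
  (T : Finset τ) (Y : Fin (k + 1) → Finset β) (pos : τ → β → κ)

theorem sum_smul_zpow_smul_sum_single_apply (c : τ → Fin (k + 1) → ℝ) (x : κ) :
    (∑ t ∈ T, ∑ i : Fin (k + 1), c t i • ((2 : ℝ) ^ (-(i : ℤ)) •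
      ∑ y ∈ Y i, EuclideanSpace.single (pos t y) (1 : ℝ))) x =
    ∑ i : Fin (k + 1), (2 : ℝ) ^ (-(i : ℤ)) * ∑ t ∈ T, c t i * #{y ∈ Y i | pos t y = x} := by
  simp only [WithLp.ofLp_sum, WithLp.ofLp_smul, Finset.sum_apply, Pi.smul_apply, smul_eq_mul,
    PiLp.single_apply, eq_comm (a := x), sum_boole, mul_sum]
  rw [sum_comm]
  exact sum_congr rfl fun i _ => sum_congr rfl fun t _ => by ring

theorem inv_two_pow_le_abs_of_lonely (e : τ → Fin (k + 1) → ℤ) (m : Fin (k + 1))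
    (hhigh : ∀ t ∈ T, ∀ i, m < i → e t i = 0) {t₀ : τ} (ht₀ : t₀ ∈ T) (hodd : Odd (e t₀ m))
    {y₀ : β} (hy₀ : y₀ ∈ Y m)
    (hlonely : ∀ t ∈ T, e t m ≠ 0 → ∀ y ∈ Y m, pos t y = pos t₀ y₀ → t = t₀ ∧ y = y₀) :
    ((2 : ℝ) ^ (m : ℕ))⁻¹ ≤ |∑ i : Fin (k + 1), (2 : ℝ) ^ (-(i : ℤ)) *
      ∑ t ∈ T, (e t i : ℝ) * #{y ∈ Y i | pos t y = pos t₀ y₀}| := by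
  classical
  have hcount : ∀ t ∈ T, e t m ≠ 0 →
      #{y ∈ Y m | pos t y = pos t₀ y₀} = if t = t₀ then 1 else 0 := by
    intro t ht hne
    split_ifs with h
    · subst h
      refine card_eq_one.2 ⟨y₀, ext fun y => ?_⟩
      simp only [mem_filter, mem_singleton]
      exact ⟨fun hy => (hlonely t ht hne y hy.1 hy.2).2, by rintro rfl; exact ⟨hy₀, rfl⟩⟩
    · exact card_eq_zero.2 <| filter_eq_empty_iff.2 fun y hy hpos =>
        h (hlonely t ht hne y hy hpos).1
  have htop : ∑ t ∈ T, e t m * #{y ∈ Y m | pos t y = pos t₀ y₀} = e t₀ m := by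
    have hne₀ : e t₀ m ≠ 0 := by rintro h; simp [h] at hodd
    rw [sum_eq_single_of_mem t₀ ht₀ fun t ht h => ?_, hcount t₀ ht₀ hne₀, if_pos rfl]
    · simp
    · by_cases hne : e t m = 0
      · simp [hne]
      · simp [hcount t ht hne, h]
  have := inv_two_pow_le_abs_sum_zpow_mul
    (fun i => ∑ t ∈ T, e t i * #{y ∈ Y i | pos t y = pos t₀ y₀}) m
    (fun i hi => sum_eq_zero fun t ht => by rw [hhigh t ht i hi, zero_mul]) (htop ▸ hodd)
  push_cast at this
  exact this

theorem one_le_norm_of_lonely [Fintype κ] (hY : ∀ i : Fin (k + 1), 4 ^ (i : ℕ) ≤ #(Y i))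
    (hlonely : ∀ A ⊆ T, A.Nonempty → ∀ i, ∀ y₀ ∈ Y i,
      ∃ t₀ ∈ A, ∀ t ∈ A, ∀ y ∈ Y i, pos t y = pos t₀ y₀ → t = t₀ ∧ y = y₀)
    (ε : τ → Fin (k + 1) → ℝ) (hε : ∀ t i, ε t i = -1 ∨ ε t i = 0 ∨ ε t i = 1)
    (hne : ∃ t ∈ T, ∃ i, ε t i ≠ 0) :
    1 ≤ ‖∑ t ∈ T, ∑ i : Fin (k + 1), ε t i • ((2 : ℝ) ^ (-(i : ℤ)) •
      ∑ y ∈ Y i, EuclideanSpace.single (pos t y) (1 : ℝ))‖ := by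
  obtain ⟨e, rfl, he⟩ : ∃ e : τ → Fin (k + 1) → ℤ,
      ε = (fun t i => (e t i : ℝ)) ∧ ∀ t i, e t i ≠ 0 → Odd (e t i) := by
    have : ∀ t i, ∃ n : ℤ, ε t i = n ∧ (n ≠ 0 → Odd n) := fun t i => by
      rcases hε t i with h | h | h
      exacts [⟨-1, by simp [h]⟩, ⟨0, by simp [h]⟩, ⟨1, by simp [h]⟩]
    choose e he using this
    exact ⟨e, funext₂ fun t i => (he t i).1, fun t i => (he t i).2⟩
  simp only [ne_eq, Int.cast_eq_zero] at hne
  obtain ⟨m, ⟨t', ht', hm⟩, hhigh⟩ := exists_last_nonzero_index hne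
  set A := T.filter (e · m ≠ 0)
  have : Nonempty τ := ⟨t'⟩
  choose! t₀ ht₀A ht₀ using hlonely A (filter_subset _ _) ⟨t', mem_filter.2 ⟨ht', hm⟩⟩ m
  set v := ∑ t ∈ T, ∑ i : Fin (k + 1), (e t i : ℝ) • ((2 : ℝ) ^ (-(i : ℤ)) •
      ∑ y ∈ Y i, EuclideanSpace.single (pos t y) (1 : ℝ))
  have hlarge : ∀ y ∈ Y m, ((2 : ℝ) ^ (m : ℕ))⁻¹ ≤ |v (pos (t₀ y) y)| := fun y hy => by
    obtain ⟨ht, hne⟩ := mem_filter.1 (ht₀A y hy)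
    rw [sum_smul_zpow_smul_sum_single_apply]
    exact inv_two_pow_le_abs_of_lonely T Y pos e m hhigh ht (he _ _ hne) hy
      fun t ht hne' => ht₀ y hy t (mem_filter.2 ⟨ht, hne'⟩)
  have hinj : Set.InjOn (fun y => pos (t₀ y) y) (Y m) := fun y₁ hy₁ y₂ hy₂ h =>
    (ht₀ y₂ hy₂ (t₀ y₁) (ht₀A y₁ hy₁) y₁ hy₁ h).2
  have hsq := card_mul_sq_le_norm_sq v hinj (by positivity) hlarge
  have h4 : (4 : ℝ) ^ (m : ℕ) * ((2 : ℝ) ^ (m : ℕ))⁻¹ ^ 2 = 1 := by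
    rw [inv_pow, ← pow_mul, mul_comm (m : ℕ), pow_mul]; norm_num
  have hcard : (4 : ℝ) ^ (m : ℕ) ≤ #(Y m) := by exact_mod_cast hY m
  nlinarith [norm_nonneg v]

end Combination

theorem construction_not_selBal_general (d k L r : ℕ) [NeZero L]
    (S : Finset (Fin d → ℤ))
    (hSnorm : ∃ R : ℝ, ∀ u ∈ S, Real.sqrt (∑ j, ((u j : ℝ)) ^ 2) = R)
    (hr : ∀ u ∈ S, ∀ j, |u j| ≤ (r : ℤ))
    (S' : Fin (k + 1) → Finset (Fin d → ℤ))
    (hchain : ∀ i i' : Fin (k + 1), i ≤ i' → S' i ⊆ S' i')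
    (hcard : ∀ i : Fin (k + 1), (S' i).card = 4 ^ i.val)
    (htop : S' (Fin.last k) = S)
    (T : Finset (Fin d → ℤ))
    (hT : T = Fintype.piFinset fun _ : Fin d => Finset.Icc ((1 : ℤ) + r) ((L : ℤ) - r))
    (u : (Fin d → ℤ) → Fin (k + 1) → EuclideanSpace ℝ (Fin d → ZMod L))
    (hu : ∀ t i, u t i = (2 : ℝ) ^ (-(i.val : ℤ)) •
      ∑ y ∈ S' i, EuclideanSpace.single (fun j : Fin d => ((t j + y j : ℤ) : ZMod L)) (1 : ℝ)) :
    T.card * (k + 1) = (L - 2 * r) ^ d * (k + 1) ∧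
    ∀ ε : (Fin d → ℤ) → Fin (k + 1) → ℝ,
      (∀ t i, ε t i = -1 ∨ ε t i = 0 ∨ ε t i = 1) →
      (∃ t ∈ T, ∃ i, ε t i ≠ 0) →
      1 ≤ ‖∑ t ∈ T, ∑ i, ε t i • u t i‖ := by
  refine ⟨?_, fun ε hε hne => ?_⟩
  · rw [hT, Fintype.card_piFinset, prod_const, Int.card_Icc, card_univ, Fintype.card_fin]
    congr 2
    omega
  obtain rfl : u = _ := funext₂ hu
  have hS : ∀ i, S' i ⊆ S := fun i => htop ▸ hchain i _ (Fin.le_last i)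
  have hbox : ∀ t ∈ T, ∀ y ∈ S, ∀ j, t j + y j ∈ Set.Ico (1 : ℤ) (1 + L) := by
    intro t ht y hy j
    rw [hT, Fintype.mem_piFinset] at ht
    have ht := mem_Icc.1 (ht j)
    have hy := abs_le.1 (hr y hy j)
    rw [Set.mem_Ico]
    omega
  obtain ⟨R, hR⟩ := hSnorm
  refine one_le_norm_of_lonely T S' _ (fun i => (hcard i).ge)
    (fun A hAT hA i y₀ hy₀ => ?_) ε hε hne
  have hnorm : ∀ y ∈ S' i, y ⬝ᵥ y = y₀ ⬝ᵥ y₀ := fun y hy =>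
    dotProduct_self_eq_of_sqrt_sum_sq_eq ((hR y (hS i hy)).trans (hR y₀ (hS i hy₀)).symm)
  exact exists_lonely_translate_mod L 1 hA hy₀ hnorm fun t ht y hy => hbox t (hAT ht) y (hS i hy)

/-- the `(k+1)(L-2r)^d` unit vectors
`u_{t,i} = 2^{-i} ∑_{y ∈ S_i} e_{t+y}`, for `t ∈ ([1+r, L-r] ∩ ℤ)^d` and
`0 ≤ i ≤ k`, are not selectively balancing: every nontrivial `{-1,0,1}`
combination has Euclidean norm at least `1`.  Coordinates of `ℝ^{L^d}` are
identified with the integer points of `[1,L]^d` via the reduction `ℤ → ZMod L`. -/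
theorem construction_not_selBal (d k L r : ℕ) [NeZero L] (hL : 2 * r < L)
    (S : Finset (Fin d → ℤ)) (hScard : S.card = 4 ^ k)
    (hSnorm : ∃ R : ℝ, ∀ u ∈ S, Real.sqrt (∑ j, ((u j : ℝ)) ^ 2) = R)
    (hr : ∀ u ∈ S, ∀ j, |u j| ≤ (r : ℤ))
    (S' : Fin (k + 1) → Finset (Fin d → ℤ))
    (hchain : ∀ i i' : Fin (k + 1), i ≤ i' → S' i ⊆ S' i')
    (hcard : ∀ i : Fin (k + 1), (S' i).card = 4 ^ i.val)
    (htop : S' (Fin.last k) = S)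
    (T : Finset (Fin d → ℤ))
    (hT : T = Fintype.piFinset fun _ : Fin d => Finset.Icc ((1 : ℤ) + r) ((L : ℤ) - r))
    (u : (Fin d → ℤ) → Fin (k + 1) → EuclideanSpace ℝ (Fin d → ZMod L))
    (hu : ∀ t i, u t i = (2 : ℝ) ^ (-(i.val : ℤ)) •
      ∑ y ∈ S' i, EuclideanSpace.single (fun j : Fin d => ((t j + y j : ℤ) : ZMod L)) (1 : ℝ)) :
    T.card * (k + 1) = (L - 2 * r) ^ d * (k + 1) ∧
    ∀ ε : (Fin d → ℤ) → Fin (k + 1) → ℝ,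
      (∀ t i, ε t i = -1 ∨ ε t i = 0 ∨ ε t i = 1) →
      (∃ t ∈ T, ∃ i, ε t i ≠ 0) →
      1 ≤ ‖∑ t ∈ T, ∑ i, ε t i • u t i‖ :=
  construction_not_selBal_general d k L r S hSnorm hr S' hchain hcard htop T hT u hu
end

section
/- Let Z ⊂ R^n be the zonotope generated by m unit vectors, Q = [−1/2, 1/2]^n, and Z^{++} = Z + Q + Q. Then the number of integer points in Z + Q is at most the volume of Z^{++}, which is at most C(m + 2n, n). -/
open MeasureTheory Pointwise Set

/-!
Integer points: the half-open unit cubes centred at the integer points of `Z + Q` are pairwise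
disjoint and contained in `Z + Q + Q`.

Volume: `Z + Q + Q` is a translate of the zonotope generated by the `u i` and two copies of the
standard basis, and a zonotope generated by `k` vectors of norm at most `1` in `ℝⁿ` has volume at
most `C(k, n)`. Induct on `k`: rotate one generator `w` onto `‖w‖ e₀`. By Fubini along `e₀`,
adding the segment `[0, ‖w‖ e₀]` to a compact convex body `A` adds at most `‖w‖` times the volume
of the projection of `A` onto `e₀ᗮ`, which is a zonotope generated by `k - 1` vectors of norm at
most `1` in `ℝⁿ⁻¹`. Pascal's rule `C(k-1, n) + C(k-1, n-1) = C(k, n)` closes the induction.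
-/

noncomputable section

section Zonotope

variable {ι κ E F : Type*} [Fintype ι] [Fintype κ]
  [AddCommGroup E] [Module ℝ E] [AddCommGroup F] [Module ℝ F]

def zonotope (v : ι → E) : Set E :=
  {x | ∃ lam : ι → ℝ, (∀ i, lam i ∈ Icc (0 : ℝ) 1) ∧ x = ∑ i, lam i • v i}

theorem zonotope_eq_image (v : ι → E) :
    zonotope v = Fintype.linearCombination ℝ v '' univ.pi fun _ => Icc 0 1 := by
  ext x
  constructor
  · rintro ⟨lam, hlam, rfl⟩
    exact ⟨lam, fun i _ => hlam i, Fintype.linearCombination_apply ℝ v lam⟩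
  · rintro ⟨lam, hlam, rfl⟩
    exact ⟨lam, fun i => hlam i trivial, Fintype.linearCombination_apply ℝ v lam⟩

theorem convex_zonotope (v : ι → E) : Convex ℝ (zonotope v) := by
  rw [zonotope_eq_image]
  exact (convex_pi fun _ _ => convex_Icc 0 1).linear_image _

theorem isCompact_zonotope [TopologicalSpace E] [IsTopologicalAddGroup E] [ContinuousSMul ℝ E]
    (v : ι → E) : IsCompact (zonotope v) := by
  rw [zonotope_eq_image]
  refine (isCompact_univ_pi fun _ => isCompact_Icc).image ?_
  simp only [Fintype.linearCombination, LinearMap.coe_mk, AddHom.coe_mk]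
  fun_prop

theorem LinearMap.image_zonotope (f : E →ₗ[ℝ] F) (v : ι → E) :
    f '' zonotope v = zonotope (f ∘ v) := by
  rw [zonotope_eq_image, zonotope_eq_image, image_image]
  congr 1
  ext lam
  simp [Fintype.linearCombination_apply]

theorem zonotope_comp_equiv (e : κ ≃ ι) (v : ι → E) : zonotope (v ∘ e) = zonotope v := by
  ext x
  constructor
  · rintro ⟨lam, hlam, rfl⟩
    refine ⟨lam ∘ e.symm, fun i => hlam _, ?_⟩
    rw [← e.sum_comp]
    simp
  · rintro ⟨lam, hlam, rfl⟩
    exact ⟨lam ∘ e, fun i => hlam _, (e.sum_comp fun i => lam i • v i).symm⟩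

theorem zonotope_sum_elim (v : ι → E) (w : κ → E) :
    zonotope (Sum.elim v w) = zonotope v + zonotope w := by
  ext x
  constructor
  · rintro ⟨lam, hlam, rfl⟩
    exact ⟨_, ⟨lam ∘ Sum.inl, fun i => hlam _, rfl⟩, _, ⟨lam ∘ Sum.inr, fun i => hlam _, rfl⟩,
      by simp [Fintype.sum_sum_type]⟩
  · rintro ⟨_, ⟨lam, hlam, rfl⟩, _, ⟨mu, hmu, rfl⟩, rfl⟩
    exact ⟨Sum.elim lam mu, Sum.forall.2 ⟨hlam, hmu⟩, by simp [Fintype.sum_sum_type]⟩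

theorem zonotope_fin_succ {k : ℕ} (v : Fin (k + 1) → E) :
    zonotope v = zonotope (fun i : Fin k => v i.succ) + segment ℝ 0 (v 0) := by
  ext x
  simp only [segment_eq_image', sub_zero, zero_add]
  constructor
  · rintro ⟨lam, hlam, rfl⟩
    exact ⟨_, ⟨fun i => lam i.succ, fun i => hlam _, rfl⟩, _, ⟨lam 0, hlam 0, rfl⟩,
      ((Fin.sum_univ_succ _).trans (add_comm _ _)).symm⟩
  · rintro ⟨_, ⟨lam, hlam, rfl⟩, _, ⟨t, ht, rfl⟩, rfl⟩
    exact ⟨Fin.cons t lam, Fin.forall_fin_succ.2 ⟨ht, hlam⟩, by simp [Fin.sum_univ_succ, add_comm]⟩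

theorem zonotope_of_isEmpty [IsEmpty ι] (v : ι → E) : zonotope v = {0} := by
  simp [zonotope]

end Zonotope

theorem Real.volume_add_Icc_le {I : Set ℝ} (hI : I.OrdConnected) (hbdd : BddAbove I) (c : ℝ) :
    volume (I + Icc 0 c) ≤ volume I + ENNReal.ofReal c := by
  have hsub : I + Icc 0 c ⊆ I ∪ Icc (sSup I) (sSup I + c) := by
    rintro _ ⟨s, hs, r, ⟨hr0, hrc⟩, rfl⟩
    by_cases h : s + r < sSup I
    · obtain ⟨y, hy, hlt⟩ := exists_lt_of_lt_csSup ⟨s, hs⟩ h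
      exact Or.inl (hI.out hs hy ⟨le_add_of_nonneg_right hr0, hlt.le⟩)
    · exact Or.inr ⟨not_lt.1 h, add_le_add (le_csSup hbdd hs) hrc⟩
  calc volume (I + Icc 0 c) ≤ volume (I ∪ Icc (sSup I) (sSup I + c)) := measure_mono hsub
    _ ≤ volume I + ENNReal.ofReal c := by
      grw [measure_union_le, Real.volume_Icc, add_sub_cancel_left]

theorem Convex.ordConnected_preimage_prodMk {F : Type*} [AddCommGroup F] [Module ℝ F]
    {A : Set (ℝ × F)} (hA : Convex ℝ A) (y : F) : ((fun t => (t, y)) ⁻¹' A).OrdConnected := by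
  refine Convex.ordConnected fun s hs t ht a b ha hb hab => ?_
  simpa [← add_smul, hab] using hA hs ht ha hb hab

theorem volume_prod_add_Icc_prod_zero_le {F : Type*} [AddCommGroup F] [Module ℝ F]
    [TopologicalSpace F] [IsTopologicalAddGroup F] [T2Space F] [MeasurableSpace F] [BorelSpace F]
    (μ : Measure F) [SFinite μ] {A : Set (ℝ × F)} (hA : IsCompact A) (hconv : Convex ℝ A)
    (c : ℝ) :
    (volume.prod μ) (A + Icc 0 c ×ˢ {0}) ≤
      (volume.prod μ) A + ENNReal.ofReal c * μ (Prod.snd '' A) := by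
  have hB : IsCompact (A + Icc 0 c ×ˢ {0}) := hA.add (isCompact_Icc.prod isCompact_singleton)
  rw [Measure.prod_apply_symm hB.measurableSet, Measure.prod_apply_symm hA.measurableSet,
    ← lintegral_indicator_const (hA.image continuous_snd).measurableSet,
    ← lintegral_add_left (measurable_measure_prodMk_right hA.measurableSet)]
  refine lintegral_mono fun y => ?_
  set I := (fun t => (t, y)) ⁻¹' A
  have hfiber : (fun t => (t, y)) ⁻¹' (A + Icc 0 c ×ˢ {0}) ⊆ I + Icc 0 c := by
    rintro t ⟨⟨s, y'⟩, hs, ⟨r, z⟩, ⟨hr, hz⟩, heq⟩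
    simp only [mem_singleton_iff] at hz
    simp only [hz, Prod.mk_add_mk, add_zero, Prod.mk.injEq] at heq
    exact ⟨s, by rwa [mem_preimage, ← heq.2], r, hr, heq.1⟩
  refine (measure_mono hfiber).trans ?_
  by_cases hy : y ∈ Prod.snd '' A
  · rw [indicator_of_mem hy]
    refine Real.volume_add_Icc_le (hconv.ordConnected_preimage_prodMk y) ?_ c
    exact (hA.image continuous_fst).bddAbove.mono
      (fun t ht => ⟨(t, y), ht, rfl⟩ : I ⊆ Prod.fst '' A)
  · have : I = ∅ := eq_empty_of_forall_notMem fun t ht => hy ⟨(t, y), ht, rfl⟩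
    simp [this]

theorem MeasureTheory.MeasurePreserving.measure_image_of_measurableEmbedding
    {α β : Type*} [MeasurableSpace α] [MeasurableSpace β] {μa : Measure α} {μb : Measure β}
    {f : α → β} (hf : MeasurePreserving f μa μb) (hemb : MeasurableEmbedding f) (s : Set α) :
    μb (f '' s) = μa s := by
  rw [← hf.measure_preimage_emb hemb, hemb.injective.preimage_image]

namespace EuclideanSpace

def headTailEquiv (m : ℕ) : EuclideanSpace ℝ (Fin (m + 1)) ≃L[ℝ] ℝ × EuclideanSpace ℝ (Fin m) :=
  (PiLp.continuousLinearEquiv 2 ℝ _).trans <| (Fin.consEquivL ℝ fun _ => ℝ).symm.trans <|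
    (ContinuousLinearEquiv.refl ℝ ℝ).prodCongr (PiLp.continuousLinearEquiv 2 ℝ _).symm

@[simp] theorem headTailEquiv_apply (m : ℕ) (x : EuclideanSpace ℝ (Fin (m + 1))) :
    headTailEquiv m x = (x 0, WithLp.toLp 2 (Fin.tail x)) := rfl

theorem measurePreserving_headTailEquiv (m : ℕ) :
    MeasurePreserving (headTailEquiv m) volume volume := by
  have h : ⇑(headTailEquiv m) = Prod.map id (WithLp.toLp 2) ∘
      MeasurableEquiv.piFinSuccAbove (fun _ => ℝ) 0 ∘ WithLp.ofLp := by
    funext x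
    simp [MeasurableEquiv.piFinSuccAbove_apply]
  rw [h]
  exact ((MeasurePreserving.id volume).prod (PiLp.volume_preserving_toLp (Fin m))).comp <|
    (volume_preserving_piFinSuccAbove (fun _ => ℝ) 0).comp (PiLp.volume_preserving_ofLp _)

theorem norm_headTailEquiv_snd_le {m : ℕ} (x : EuclideanSpace ℝ (Fin (m + 1))) :
    ‖(headTailEquiv m x).2‖ ≤ ‖x‖ := by
  simp only [headTailEquiv_apply, EuclideanSpace.norm_eq, Fin.tail]
  gcongr
  rw [Fin.sum_univ_succ]
  exact le_add_of_nonneg_left (sq_nonneg _)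

theorem headTailEquiv_single_zero (m : ℕ) (t : ℝ) :
    headTailEquiv m (EuclideanSpace.single 0 t) = (t, 0) := by
  ext i <;> simp [Fin.tail, Fin.succ_ne_zero]

theorem volume_add_segment_single_zero_le {m : ℕ} {A : Set (EuclideanSpace ℝ (Fin (m + 1)))}
    (hA : IsCompact A) (hconv : Convex ℝ A) {c : ℝ} (hc : 0 ≤ c) :
    volume (A + segment ℝ 0 (EuclideanSpace.single 0 c)) ≤
      volume A + ENNReal.ofReal c * volume ((fun x => (headTailEquiv m x).2) '' A) := by
  set L := headTailEquiv m
  have hvol := (measurePreserving_headTailEquiv m).measure_image_of_measurableEmbedding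
    L.toHomeomorph.measurableEmbedding
  have hseg : L '' segment ℝ 0 (EuclideanSpace.single 0 c) ⊆ Icc 0 c ×ˢ {0} := by
    rw [segment_eq_image']
    rintro _ ⟨_, ⟨θ, ⟨hθ0, hθ1⟩, rfl⟩, rfl⟩
    simp only [sub_zero, zero_add, map_smul, L, headTailEquiv_single_zero, Prod.smul_mk,
      smul_zero, smul_eq_mul]
    exact ⟨⟨mul_nonneg hθ0 hc, mul_le_of_le_one_left hc hθ1⟩, rfl⟩
  rw [← hvol, ← hvol A, image_add, ← image_image Prod.snd L A]
  calc volume (L '' A + L '' segment ℝ 0 (EuclideanSpace.single 0 c))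
      ≤ (volume.prod volume) (L '' A + Icc 0 c ×ˢ {0}) := measure_mono (add_subset_add_left hseg)
    _ ≤ _ := volume_prod_add_Icc_prod_zero_le volume (hA.image L.continuous)
        (hconv.linear_image L.toLinearMap) c

end EuclideanSpace

open EuclideanSpace in
theorem exists_volume_zonotope_fin_succ_le {m k : ℕ}
    (v : Fin (k + 1) → EuclideanSpace ℝ (Fin (m + 1))) :
    ∃ w : Fin k → EuclideanSpace ℝ (Fin (m + 1)), (∀ i, ‖w i‖ = ‖v i.succ‖) ∧
      volume (zonotope v) ≤ volume (zonotope w) +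
        ENNReal.ofReal ‖v 0‖ * volume (zonotope fun i => (headTailEquiv m (w i)).2) := by
  let R := Submodule.reflection (ℝ ∙ (v 0 - single 0 ‖v 0‖))ᗮ
  have hR : R (v 0) = single 0 ‖v 0‖ := Submodule.reflection_sub (by simp)
  let w : Fin k → EuclideanSpace ℝ (Fin (m + 1)) := fun i => R (v i.succ)
  have hRv : R '' zonotope v = zonotope w + segment ℝ 0 (single 0 ‖v 0‖) := by
    refine (R.toLinearMap.image_zonotope v).trans ?_
    rw [zonotope_fin_succ]
    simp [w, hR]
  have hproj := ((LinearMap.snd ℝ ℝ _).comp (headTailEquiv m).toLinearMap).image_zonotope w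
  refine ⟨w, fun i => R.norm_map _, ?_⟩
  calc volume (zonotope v) = volume (R '' zonotope v) :=
        (R.measurePreserving.measure_image_of_measurableEmbedding
          R.toHomeomorph.measurableEmbedding _).symm
    _ ≤ volume (zonotope w) +
        ENNReal.ofReal ‖v 0‖ * volume ((fun x => (headTailEquiv m x).2) '' zonotope w) := by
      rw [hRv]
      exact volume_add_segment_single_zero_le (isCompact_zonotope w) (convex_zonotope w)
        (norm_nonneg _)
    _ = _ := congrArg (fun S => volume (zonotope w) + ENNReal.ofReal ‖v 0‖ * volume S) hproj

theorem volume_zonotope_fin_le_choose {n k : ℕ} (v : Fin k → EuclideanSpace ℝ (Fin n))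
    (hv : ∀ i, ‖v i‖ ≤ 1) : volume (zonotope v) ≤ k.choose n := by
  induction k generalizing n with
  | zero =>
    rw [zonotope_of_isEmpty]
    cases n with
    | zero => simp [volume_euclideanSpace_eq_dirac]
    | succ m => simp
  | succ k ih =>
    cases n with
    | zero =>
      simpa [volume_euclideanSpace_eq_dirac] using
        measure_mono (μ := volume) (subset_univ (zonotope v))
    | succ m =>
      obtain ⟨w, hw, hvol⟩ := exists_volume_zonotope_fin_succ_le v
      have hw1 : ∀ i, ‖w i‖ ≤ 1 := fun i => (hw i).trans_le (hv i.succ)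
      calc volume (zonotope v) ≤ _ := hvol
        _ ≤ k.choose (m + 1) + 1 * k.choose m := by
          gcongr
          · exact ih w hw1
          · exact ENNReal.ofReal_le_one.2 (hv 0)
          · exact ih _ fun i => (EuclideanSpace.norm_headTailEquiv_snd_le (w i)).trans (hw1 i)
        _ = (k + 1).choose (m + 1) := by
          rw [one_mul, Nat.choose_succ_succ', Nat.cast_add, add_comm]

theorem volume_zonotope_le_choose {ι : Type*} [Fintype ι] {n : ℕ}
    (v : ι → EuclideanSpace ℝ (Fin n)) (hv : ∀ i, ‖v i‖ ≤ 1) :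
    volume (zonotope v) ≤ (Fintype.card ι).choose n := by
  rw [← zonotope_comp_equiv (Fintype.equivFin ι).symm v]
  exact volume_zonotope_fin_le_choose _ fun i => hv _

section Cube

def halfOpenUnitCube (ι : Type*) : Set (EuclideanSpace ℝ ι) :=
  WithLp.ofLp ⁻¹' univ.pi fun _ => Ico (-1 / 2) (1 / 2)

variable {ι : Type*}

theorem halfOpenUnitCube_subset : halfOpenUnitCube ι ⊆ {x | ∀ i, |x i| ≤ 1 / 2} := fun x hx i => by
  have := hx i trivial
  simp only [mem_Ico] at this
  rw [abs_le]
  constructor <;> linarith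

theorem floor_add_half_eq_of_mem_vadd_halfOpenUnitCube {p : ι → ℤ} {x : EuclideanSpace ℝ ι}
    (hx : x ∈ WithLp.toLp 2 (fun i => (p i : ℝ)) +ᵥ halfOpenUnitCube ι) (i : ι) :
    ⌊x i + 1 / 2⌋ = p i := by
  obtain ⟨y, hy, rfl⟩ := hx
  have := hy i trivial
  simp only [mem_Ico] at this
  rw [Int.floor_eq_iff]
  simp only [vadd_eq_add, PiLp.add_apply]
  constructor <;> linarith

theorem pairwise_disjoint_vadd_halfOpenUnitCube :
    Pairwise (Function.onFun Disjoint fun p : ι → ℤ =>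
      WithLp.toLp 2 (fun i => (p i : ℝ)) +ᵥ halfOpenUnitCube ι) :=
  fun _ _ hpq => disjoint_left.2 fun _ hxp hxq => hpq <| funext fun i =>
    (floor_add_half_eq_of_mem_vadd_halfOpenUnitCube hxp i).symm.trans
      (floor_add_half_eq_of_mem_vadd_halfOpenUnitCube hxq i)

variable [Fintype ι]

theorem zonotope_basisFun :
    zonotope (EuclideanSpace.basisFun ι ℝ) = {x | ∀ i, x i ∈ Icc 0 1} := by
  ext x
  constructor
  · rintro ⟨lam, hlam, rfl⟩ i
    classical
    simpa [EuclideanSpace.basisFun_apply, Pi.single_apply] using hlam i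
  · intro hx
    exact ⟨fun i => x i, hx, ((EuclideanSpace.basisFun ι ℝ).sum_repr x).symm.trans (by simp)⟩

theorem cube_eq_singleton_add_zonotope_basisFun :
    {x : EuclideanSpace ℝ ι | ∀ i, |x i| ≤ 1 / 2} =
      {WithLp.toLp 2 fun _ => -1 / 2} + zonotope (EuclideanSpace.basisFun ι ℝ) := by
  ext x
  rw [zonotope_basisFun, singleton_add, image_add_left, mem_preimage]
  simp only [mem_ofPred_eq, abs_le, mem_Icc, PiLp.add_apply, PiLp.neg_apply]
  refine forall_congr' fun i => ?_
  constructor <;> intro h <;> constructor <;> linarith [h.1, h.2]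

theorem measurableSet_halfOpenUnitCube : MeasurableSet (halfOpenUnitCube ι) :=
  (PiLp.volume_preserving_ofLp ι).measurable (MeasurableSet.univ_pi fun _ => measurableSet_Ico)

theorem volume_halfOpenUnitCube : volume (halfOpenUnitCube ι) = 1 := by
  rw [halfOpenUnitCube, (PiLp.volume_preserving_ofLp ι).measure_preimage
    (MeasurableSet.univ_pi fun _ => measurableSet_Ico).nullMeasurableSet, volume_pi_pi]
  norm_num [Real.volume_Ico]

theorem ncard_intPoints_le_volume_add_cube (A : Set (EuclideanSpace ℝ ι)) :
    ({p : ι → ℤ | WithLp.toLp 2 (fun i => (p i : ℝ)) ∈ A}.ncard : ENNReal) ≤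
      volume (A + {x | ∀ i, |x i| ≤ 1 / 2}) := by
  set S := {p : ι → ℤ | WithLp.toLp 2 (fun i => (p i : ℝ)) ∈ A}
  rcases S.finite_or_infinite with hS | hS
  swap
  · simp [hS.ncard]
  let C : (ι → ℤ) → Set (EuclideanSpace ℝ ι) := fun p =>
    WithLp.toLp 2 (fun i => (p i : ℝ)) +ᵥ halfOpenUnitCube ι
  have hsub : ∀ p ∈ S, C p ⊆ A + {x | ∀ i, |x i| ≤ 1 / 2} := fun p hp =>
    (vadd_set_subset_add (show WithLp.toLp 2 _ ∈ A from hp)).trans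
      (add_subset_add_left halfOpenUnitCube_subset)
  calc (S.ncard : ENNReal) = ∑ p ∈ hS.toFinset, volume (C p) := by
        simp [C, measure_vadd, volume_halfOpenUnitCube, ncard_eq_toFinset_card S hS]
    _ = volume (⋃ p ∈ hS.toFinset, C p) :=
        (measure_biUnion_finset (pairwise_disjoint_vadd_halfOpenUnitCube.set_pairwise _)
          fun p _ => measurableSet_halfOpenUnitCube.const_vadd _).symm
    _ ≤ volume (A + {x | ∀ i, |x i| ≤ 1 / 2}) :=
        measure_mono (iUnion₂_subset fun p hp => hsub p (hS.mem_toFinset.1 hp))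

end Cube

/-- with `Z` the zonotope of `m` unit vectors, `Q = [-1/2,1/2]^n`,
the number of integer points in `Z + Q` is at most `vol(Z + Q + Q)`, which is at
most `C(m + 2n, n)`. -/
theorem lattice_points_le_volume {n m : ℕ} (u : Fin m → EuclideanSpace ℝ (Fin n))
    (hu : ∀ i, ‖u i‖ = 1)
    (Z Q : Set (EuclideanSpace ℝ (Fin n)))
    (hZ : Z = {x | ∃ lam : Fin m → ℝ, (∀ i, lam i ∈ Set.Icc (0 : ℝ) 1) ∧
      x = ∑ i, lam i • u i})
    (hQ : Q = {x | ∀ i, |x i| ≤ 1 / 2}) :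
    ({p : Fin n → ℤ | (WithLp.toLp 2 (fun i => (p i : ℝ)) : EuclideanSpace ℝ (Fin n)) ∈ Z + Q}.ncard
        : ENNReal) ≤ MeasureTheory.volume (Z + Q + Q) ∧
    MeasureTheory.volume (Z + Q + Q) ≤ ((m + 2 * n).choose n : ENNReal) := by
  refine ⟨hQ ▸ ncard_intPoints_le_volume_add_cube (Z + Q), ?_⟩
  set a : EuclideanSpace ℝ (Fin n) := WithLp.toLp 2 fun _ => -1 / 2
  set b := EuclideanSpace.basisFun (Fin n) ℝ
  have hZQQ : Z + Q + Q = {a + a} + zonotope (Sum.elim u (Sum.elim b b)) := by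
    rw [show Z = zonotope u from hZ, hQ, cube_eq_singleton_add_zonotope_basisFun,
      zonotope_sum_elim, zonotope_sum_elim, ← singleton_add_singleton]
    abel
  rw [hZQQ, singleton_add, image_add_left, measure_preimage_add]
  calc volume (zonotope (Sum.elim u (Sum.elim b b)))
      ≤ (Fintype.card (Fin m ⊕ (Fin n ⊕ Fin n))).choose n :=
        volume_zonotope_le_choose _ (by rintro (i | i | i) <;> simp [hu, b])
    _ = (m + 2 * n).choose n := by simp [two_mul]
end
end
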